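/- arXiv:2308.03994 — 4 statements merged into one kernel-verified Lean document; each statement's English description precedes it below -/
import Mathlib

section
/- Let F_y be a nonzero real number, κ > 0 a real number, and z_c ∈ ℂ with Im z_c < 0. Define (using the principal branch of the complex logarithm) φ(z) = −(i F_y)/(2π(1+κ))·(κ·log(z − conj z_c) + log(z − z_c)), φ'(z) = −(i F_y)/(2π(1+κ))·(κ/(z − conj z_c) + 1/(z − z_c)), ψ(z) = −(i F_y)/(2π(1+κ))·(log(z − conj z_c) + κ·log(z − z_c)), and the displacement function g(z) = κ·φ(z) − z·conj(φ'(z)) − conj(ψ(z)). Then the modulus of the displacement is unbounded at infinity: ‖g(x)‖ → ∞ as the real variable x → +∞. -/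
open Complex Filter

/-- The complex potential `φ` containing the logarithmic terms produced by the unbalanced
vertical resultant `F_y` (Eq. (2.5) with `F_x = 0`). -/
noncomputable def phiPot (Fy κ : ℝ) (zc : ℂ) (z : ℂ) : ℂ :=
  -(Complex.I * Fy) / (2 * Real.pi * (1 + κ)) *
    (κ * Complex.log (z - (starRingEnd ℂ) zc) + Complex.log (z - zc))

/-- The derivative of the complex potential `φ`. -/
noncomputable def phiPot' (Fy κ : ℝ) (zc : ℂ) (z : ℂ) : ℂ :=
  -(Complex.I * Fy) / (2 * Real.pi * (1 + κ)) *
    (κ / (z - (starRingEnd ℂ) zc) + 1 / (z - zc))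

/-- The complex potential `ψ` containing the logarithmic terms produced by the unbalanced
vertical resultant `F_y` (Eq. (2.5) with `F_x = 0`). -/
noncomputable def psiPot (Fy κ : ℝ) (zc : ℂ) (z : ℂ) : ℂ :=
  -(Complex.I * Fy) / (2 * Real.pi * (1 + κ)) *
    (Complex.log (z - (starRingEnd ℂ) zc) + κ * Complex.log (z - zc))

/-- The displacement function `g(z) = κ φ(z) − z conj(φ'(z)) − conj(ψ(z))`. -/
noncomputable def dispFun (Fy κ : ℝ) (zc : ℂ) (z : ℂ) : ℂ :=
  κ * phiPot Fy κ zc z - z * (starRingEnd ℂ) (phiPot' Fy κ zc z) -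
    (starRingEnd ℂ) (psiPot Fy κ zc z)

/-!
For real `x ≥ Re z_c`, where `x − z_c` avoids the branch cut of `log`, the conjugated
logarithms of `ψ` recombine with those of `φ`, and since `conj (i F_y) = -(i F_y)` the
displacement becomes `c · B(x)` with `c = -(i F_y)/(2π(1+κ)) ≠ 0` and
`B(x) = (κ+1)(κ log(x − z̄_c) + log(x − z_c)) + x(κ/(x − z_c) + 1/(x − z̄_c))`.
As `|x − z̄_c| = |x − z_c|`, the real part of `B(x)` is `(κ+1)² log|x − z_c|` plus a term
tending to `κ + 1`, so `‖g(x)‖ ≥ ‖c‖ Re B(x)` grows like a logarithm.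
-/

open Bornology Topology ComplexConjugate

theorem tendsto_div_sub_const_cobounded {𝕜 : Type*} [NormedField 𝕜] (w : 𝕜) :
    Tendsto (fun z => z / (z - w)) (cobounded 𝕜) (𝓝 1) := by
  have hinv : Tendsto (fun z => w * (z - w)⁻¹) (cobounded 𝕜) (𝓝 0) := by
    simpa using (tendsto_inv₀_cobounded.comp (tendsto_sub_const_cobounded w)).const_mul w
  refine (tendsto_congr' ?_).2 (by simpa using hinv.const_add 1)
  filter_upwards [eventually_ne_cobounded w] with z hz
  have : z - w ≠ 0 := sub_ne_zero.2 hz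
  field_simp
  ring

lemma norm_ofReal_sub_conj (x : ℝ) (w : ℂ) : ‖(x : ℂ) - conj w‖ = ‖(x : ℂ) - w‖ := by
  rw [← Complex.norm_conj, map_sub, conj_ofReal, conj_conj]

lemma conj_log_ofReal_sub {x : ℝ} {w : ℂ} (h : w.re ≤ x) :
    conj (log (x - w)) = log (x - conj w) := by
  have harg : ((x : ℂ) - w).arg ≠ Real.pi := fun hπ => by
    have := (arg_eq_pi_iff.1 hπ).1
    simp only [sub_re, ofReal_re] at this
    linarith
  rw [← log_conj _ harg, map_sub, conj_ofReal]

noncomputable def potCoeff (Fy κ : ℝ) : ℂ :=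
  -(I * Fy) / (2 * Real.pi * (1 + κ))

lemma conj_potCoeff (Fy κ : ℝ) : conj (potCoeff Fy κ) = -potCoeff Fy κ := by
  simp only [potCoeff, map_div₀, map_neg, map_mul, conj_I, conj_ofReal, map_add, map_one,
    map_ofNat]
  ring

lemma potCoeff_ne_zero {Fy κ : ℝ} (hF : Fy ≠ 0) (hκ : 1 + κ ≠ 0) : potCoeff Fy κ ≠ 0 := by
  have hκ' : (1 : ℂ) + κ ≠ 0 := by exact_mod_cast hκ
  simp [potCoeff, hF, hκ', Real.pi_ne_zero]

noncomputable def dispRemainder (κ : ℝ) (zc : ℂ) (x : ℝ) : ℂ :=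
  x * (κ / (x - zc) + 1 / (x - conj zc))

noncomputable def dispBracket (κ : ℝ) (zc : ℂ) (x : ℝ) : ℂ :=
  (κ + 1) * (κ * log (x - conj zc) + log (x - zc)) + dispRemainder κ zc x

lemma dispFun_ofReal {Fy κ x : ℝ} {zc : ℂ} (hx : zc.re ≤ x) :
    dispFun Fy κ zc x = potCoeff Fy κ * dispBracket κ zc x := by
  have hlog₁ := conj_log_ofReal_sub hx
  have hlog₂ : conj (log (x - conj zc)) = log (x - zc) := by
    simpa using conj_log_ofReal_sub (w := conj zc) (by simpa using hx)
  have hc := conj_potCoeff Fy κ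
  simp only [potCoeff] at hc
  simp only [dispFun, phiPot, phiPot', psiPot, dispBracket, dispRemainder, potCoeff, map_mul,
    map_add, map_div₀, map_sub, map_one, conj_ofReal, conj_conj, hc, hlog₁, hlog₂]
  ring

lemma tendsto_dispRemainder (κ : ℝ) (zc : ℂ) :
    Tendsto (dispRemainder κ zc) atTop (𝓝 (κ + 1)) := by
  have hratio (w : ℂ) : Tendsto (fun x : ℝ => (x : ℂ) / (x - w)) atTop (𝓝 1) :=
    (tendsto_div_sub_const_cobounded w).comp (RCLike.tendsto_ofReal_atTop_cobounded ℂ)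
  have := ((hratio zc).const_mul (κ : ℂ)).add (hratio (conj zc))
  simp only [mul_one] at this
  convert this using 2 with x
  simp only [dispRemainder]
  ring

lemma re_dispBracket (κ : ℝ) (zc : ℂ) (x : ℝ) :
    (dispBracket κ zc x).re =
      (κ + 1) ^ 2 * Real.log ‖(x : ℂ) - zc‖ + (dispRemainder κ zc x).re := by
  have hcast : ((κ : ℂ) + 1) = ((κ + 1 : ℝ) : ℂ) := by push_cast; rfl
  rw [dispBracket, add_re, hcast, re_ofReal_mul, add_re, re_ofReal_mul, log_re, log_re,
    norm_ofReal_sub_conj]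
  ring

lemma tendsto_log_norm_ofReal_sub (w : ℂ) :
    Tendsto (fun x : ℝ => Real.log ‖(x : ℂ) - w‖) atTop atTop :=
  Real.tendsto_log_atTop.comp <| tendsto_norm_cobounded_atTop.comp <|
    (tendsto_sub_const_cobounded w).comp (RCLike.tendsto_ofReal_atTop_cobounded ℂ)

theorem displacement_singularity_at_infinity_general (Fy κ : ℝ) (hF : Fy ≠ 0) (hκ : 0 < κ)
    (zc : ℂ) :
    Tendsto (fun x : ℝ => ‖dispFun Fy κ zc (x : ℂ)‖) atTop atTop := by
  have hc : 0 < ‖potCoeff Fy κ‖ := norm_pos_iff.2 (potCoeff_ne_zero hF (by linarith))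
  have hre : Tendsto (fun x => (dispBracket κ zc x).re) atTop atTop := by
    simp only [re_dispBracket]
    exact ((tendsto_log_norm_ofReal_sub zc).const_mul_atTop (by positivity)).atTop_add
      ((continuous_re.tendsto _).comp (tendsto_dispRemainder κ zc))
  refine tendsto_atTop_mono' _ ?_ (hre.const_mul_atTop hc)
  filter_upwards [eventually_ge_atTop zc.re] with x hx
  rw [dispFun_ofReal hx, norm_mul]
  exact mul_le_mul_of_nonneg_left (re_le_norm _) hc.le

/-- With a nonzero unbalanced resultant `F_y`, the displacement modulus is unbounded as the
real variable `x → +∞`: the displacement has a singularity at infinity. -/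
theorem displacement_singularity_at_infinity (Fy κ : ℝ) (hF : Fy ≠ 0) (hκ : 0 < κ)
    (zc : ℂ) (hzc : zc.im < 0) :
    Tendsto (fun x : ℝ => ‖dispFun Fy κ zc (x : ℂ)‖) atTop atTop :=
  displacement_singularity_at_infinity_general Fy κ hF hκ zc
end

section
/- Let 0 < R < h, a = √(h² − R²), r = R/(h + √(h² − R²)). For every z ∈ ℂ with Im z < 0 and |z + ih| > R, one has r < |(z + ia)/(z − ia)| < 1. That is, the forward Verruijt mapping sends the geomaterial region (the open lower half plane with the closed tunnel disk removed) into the open annulus r < |ζ| < 1. -/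
/-!
Write `z = x + iy`. The upper bound is the identity `|z + ia|² − |z − ia|² = 4ay`, negative on
the lower half plane. For the lower bound, `a² + R² = h²` gives
`(h + a)²|z + ia|² − R²|z − ia|² = 2a(h + a)(|z + ih|² − R²)`, positive outside the tunnel disk,
and `r = R/(h + a)`.
-/

open Complex

namespace Complex

theorem normSq_add_mul_I_sub_normSq_sub_mul_I (z : ℂ) (a : ℝ) :
    normSq (z + a * I) - normSq (z - a * I) = 4 * a * z.im := by
  simp only [normSq_apply, add_re, add_im, sub_re, sub_im, mul_re, mul_im, ofReal_re,
    ofReal_im, I_re, I_im]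
  ring

theorem norm_add_mul_I_lt_norm_sub_mul_I {z : ℂ} {a : ℝ} (ha : 0 < a) (hz : z.im < 0) :
    ‖z + a * I‖ < ‖z - a * I‖ := by
  have hdiff := normSq_add_mul_I_sub_normSq_sub_mul_I z a
  have hsq : ‖z + a * I‖ ^ 2 < ‖z - a * I‖ ^ 2 := by
    rw [Complex.sq_norm, Complex.sq_norm]
    nlinarith
  exact lt_of_pow_lt_pow_left₀ 2 (norm_nonneg _) hsq

theorem sq_mul_normSq_add_mul_I_sub_sq_mul_normSq_sub_mul_I (z : ℂ) {a h R : ℝ}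
    (hRha : a ^ 2 + R ^ 2 = h ^ 2) :
    (h + a) ^ 2 * normSq (z + a * I) - R ^ 2 * normSq (z - a * I) =
      2 * a * (h + a) * (normSq (z + h * I) - R ^ 2) := by
  have hR : R ^ 2 = h ^ 2 - a ^ 2 := by linarith
  simp only [normSq_apply, add_re, add_im, sub_re, sub_im, mul_re, mul_im, ofReal_re,
    ofReal_im, I_re, I_im, hR]
  ring

theorem mul_norm_sub_mul_I_lt_mul_norm_add_mul_I {z : ℂ} {a h R : ℝ} (hR : 0 ≤ R)
    (ha : 0 < a) (hha : 0 < h + a) (hRha : a ^ 2 + R ^ 2 = h ^ 2) (hz : R < ‖z + h * I‖) :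
    R * ‖z - a * I‖ < (h + a) * ‖z + a * I‖ := by
  have hidentity := sq_mul_normSq_add_mul_I_sub_sq_mul_normSq_sub_mul_I z hRha
  have hdisk : R ^ 2 < normSq (z + h * I) := by
    rw [← Complex.sq_norm]
    exact pow_lt_pow_left₀ hz hR two_ne_zero
  have hsq : (R * ‖z - a * I‖) ^ 2 < ((h + a) * ‖z + a * I‖) ^ 2 := by
    rw [mul_pow, mul_pow, Complex.sq_norm, Complex.sq_norm]
    nlinarith [mul_pos (mul_pos (mul_pos two_pos ha) hha) (sub_pos.2 hdisk)]
  exact lt_of_pow_lt_pow_left₀ 2 (by positivity) hsq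

end Complex

/-- The forward Verruijt mapping `ζ(z) = (z + ia)/(z − ia)`, with `a = √(h² − R²)` and
`r = R/(h + √(h² − R²))`, sends the geomaterial region (the open lower half plane with the
closed tunnel disk removed) into the open annulus `r < |ζ| < 1`. -/
theorem verruijt_maps_geomaterial_into_annulus (R h a r : ℝ) (hR : 0 < R) (hRh : R < h)
    (ha : a = Real.sqrt (h ^ 2 - R ^ 2))
    (hr : r = R / (h + Real.sqrt (h ^ 2 - R ^ 2))) :
    ∀ z : ℂ, z.im < 0 → R < ‖z + h * Complex.I‖ →
      r < ‖(z + a * Complex.I) / (z - a * Complex.I)‖ ∧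
      ‖(z + a * Complex.I) / (z - a * Complex.I)‖ < 1 := by
  intro z hz hdisk
  have hpos : 0 < h ^ 2 - R ^ 2 := by nlinarith
  have ha_pos : 0 < a := ha ▸ Real.sqrt_pos.2 hpos
  have hRha : a ^ 2 + R ^ 2 = h ^ 2 := by rw [ha, Real.sq_sqrt hpos.le]; ring
  have hupper := norm_add_mul_I_lt_norm_sub_mul_I ha_pos hz
  have hlower := mul_norm_sub_mul_I_lt_mul_norm_add_mul_I hR.le ha_pos (by linarith) hRha hdisk
  have hden : 0 < ‖z - a * I‖ := (norm_nonneg _).trans_lt hupper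
  rw [hr, ← ha, norm_div, div_lt_div_iff₀ (by linarith) hden, div_lt_one hden]
  exact ⟨by linarith, hupper⟩
end

section
/- Let 0 < R < h, a = √(h² − R²), r = R/(h + √(h² − R²)), and z(ζ) = −ia·(1 + ζ)/(1 − ζ). Then for every complex ζ with |ζ| = r, the image point satisfies |z(ζ) + ih| = R; that is, the backward Verruijt mapping sends the circle of radius r centered at the origin onto the tunnel periphery. -/
/-!
Writing `a = √(h² - R²)`, the radius `r = R / (h + a)` satisfies `(h + a) r = R` and, since
`(h - a)(h + a) = R²`, also `h - a = R r`. Hence `z(ζ) + ih = i (R / r) (r² - ζ) / (1 - ζ)`,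
a Möbius transformation with a pole at `1` and a zero at `r²`, the inverse point of `1` with
respect to the circle `|ζ| = r`. On that circle `r² - ζ = ζ (conj ζ - 1)`, so
`|r² - ζ| = r |1 - ζ|` and `|z(ζ) + ih| = R`.
-/

open Complex ComplexConjugate

theorem Complex.norm_ofReal_sq_sub_eq_mul_norm_one_sub {ζ : ℂ} {r : ℝ} (hζ : ‖ζ‖ = r) :
    ‖(r : ℂ) ^ 2 - ζ‖ = r * ‖1 - ζ‖ := by
  have hr : (r : ℂ) ^ 2 = ζ * conj ζ := by
    rw [mul_conj, normSq_eq_norm_sq, hζ, ofReal_pow]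
  have hfactor : (r : ℂ) ^ 2 - ζ = -ζ * conj (1 - ζ) := by
    rw [hr, map_sub, map_one]; ring
  rw [hfactor, norm_mul, norm_neg, norm_conj, hζ]

theorem Complex.norm_ofReal_sq_sub_div_one_sub {ζ : ℂ} {r : ℝ} (hζ : ‖ζ‖ = r) (hr : r ≠ 1) :
    ‖((r : ℂ) ^ 2 - ζ) / (1 - ζ)‖ = r := by
  have hζ1 : 1 - ζ ≠ 0 := by
    rintro h
    rw [← sub_eq_zero.mp h, norm_one] at hζ
    exact hr hζ.symm
  rw [norm_div, norm_ofReal_sq_sub_eq_mul_norm_one_sub hζ, mul_div_assoc,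
    div_self (norm_ne_zero_iff.mpr hζ1), mul_one]

section VerruijtParameters

variable {R h : ℝ}

theorem verruijt_denominator_pos (hR : 0 < R) (hRh : R < h) : 0 < h + √(h ^ 2 - R ^ 2) := by
  linarith [Real.sqrt_nonneg (h ^ 2 - R ^ 2)]

theorem verruijt_radius_mul (hR : 0 < R) (hRh : R < h) :
    (h + √(h ^ 2 - R ^ 2)) * (R / (h + √(h ^ 2 - R ^ 2))) = R :=
  mul_div_cancel₀ R (verruijt_denominator_pos hR hRh).ne'

theorem verruijt_sub_eq_mul_radius (hR : 0 < R) (hRh : R < h) :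
    h - √(h ^ 2 - R ^ 2) = R * (R / (h + √(h ^ 2 - R ^ 2))) := by
  have hsq : √(h ^ 2 - R ^ 2) ^ 2 = h ^ 2 - R ^ 2 := Real.sq_sqrt (by nlinarith)
  have hpos := verruijt_denominator_pos hR hRh
  field_simp
  linear_combination -hsq

theorem verruijt_radius_pos (hR : 0 < R) (hRh : R < h) :
    0 < R / (h + √(h ^ 2 - R ^ 2)) :=
  div_pos hR (verruijt_denominator_pos hR hRh)

theorem verruijt_radius_lt_one (hR : 0 < R) (hRh : R < h) :
    R / (h + √(h ^ 2 - R ^ 2)) < 1 := by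
  rw [div_lt_one (verruijt_denominator_pos hR hRh)]
  linarith [Real.sqrt_nonneg (h ^ 2 - R ^ 2)]

end VerruijtParameters

theorem verruijt_map_add_eq_mobius {R h a r : ℝ} {ζ : ℂ} (hr : r ≠ 0) (hζ : ζ ≠ 1)
    (hsub : h - a = R * r) (hadd : (h + a) * r = R) :
    -I * a * (1 + ζ) / (1 - ζ) + h * I = I * (R / r) * (((r : ℂ) ^ 2 - ζ) / (1 - ζ)) := by
  have hζ1 : (1 : ℂ) - ζ ≠ 0 := sub_ne_zero.mpr hζ.symm
  have hsub' : (h : ℂ) - a = R * r := by exact_mod_cast hsub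
  have hadd' : ((h : ℂ) + a) * r = R := by exact_mod_cast hadd
  have hRr : (R : ℂ) / r = h + a := by
    rw [div_eq_iff (ofReal_ne_zero.mpr hr), hadd']
  rw [hRr, div_add' _ _ _ hζ1, mul_div_assoc', div_left_inj' hζ1]
  linear_combination I * (hsub' - r * hadd')

/-- The backward Verruijt mapping `z(ζ) = −ia(1 + ζ)/(1 − ζ)`, with `a = √(h² − R²)` and
`r = R/(h + √(h² − R²))`, sends the circle `|ζ| = r` onto the tunnel periphery
`|z + ih| = R`. -/
theorem verruijt_backward_maps_inner_circle (R h a r : ℝ) (hR : 0 < R) (hRh : R < h)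
    (ha : a = Real.sqrt (h ^ 2 - R ^ 2))
    (hr : r = R / (h + Real.sqrt (h ^ 2 - R ^ 2))) :
    ∀ ζ : ℂ, ‖ζ‖ = r →
      ‖-Complex.I * a * (1 + ζ) / (1 - ζ) + h * Complex.I‖ = R := by
  intro ζ hζ
  have hr0 : 0 < r := hr ▸ verruijt_radius_pos hR hRh
  have hr1 : r < 1 := hr ▸ verruijt_radius_lt_one hR hRh
  have hζ1 : ζ ≠ 1 := by
    rintro rfl
    rw [norm_one] at hζ
    exact hr1.ne' hζ
  have hsub : h - a = R * r := ha ▸ hr ▸ verruijt_sub_eq_mul_radius hR hRh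
  have hadd : (h + a) * r = R := ha ▸ hr ▸ verruijt_radius_mul hR hRh
  rw [verruijt_map_add_eq_mobius hr0.ne' hζ1 hsub hadd, norm_mul, norm_mul, norm_I, one_mul,
    norm_ofReal_sq_sub_div_one_sub hζ hr1.ne, Complex.norm_div, norm_real, norm_real,
    Real.norm_of_nonneg hR.le, Real.norm_of_nonneg hr0.le, div_mul_cancel₀ R hr0.ne']
end

section
/- Let 0 < R < h, a = √(h² − R²), r = R/(h + √(h² − R²)), and z(ζ) = −ia·(1 + ζ)/(1 − ζ). Then for every complex ζ with r < |ζ| < 1, the image point satisfies Im z(ζ) < 0 and |z(ζ) + ih| > R; that is, the backward Verruijt mapping sends the open annulus r < |ζ| < 1 into the geomaterial region (the open lower half plane with the closed tunnel disk removed). -/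
/-!
With `w = (1 + ζ)/(1 − ζ)` one has `Im z = −a Re w = −a (1 − |ζ|²)/|1 − ζ|²`, which is negative
inside the unit disk. Since `(h − a)(h + a) = R²` and `r (h + a) = R`, we get `h − a = r² (h + a)`,
hence `z + ih = −i (h + a)(ζ − r²)/(1 − ζ)`, and `|z + ih| > R` becomes `|ζ − r²| > r |1 − ζ|`.
By the Apollonius identity `|ζ − r²|² − r² |1 − ζ|² = (1 − r²)(|ζ|² − r²)` this holds once `r < |ζ|`.
-/

open Complex

theorem Complex.re_one_add_div_one_sub (ζ : ℂ) :
    ((1 + ζ) / (1 - ζ)).re = (1 - ‖ζ‖ ^ 2) / ‖1 - ζ‖ ^ 2 := by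
  rw [div_re, ← add_div, Complex.sq_norm, Complex.sq_norm, normSq_apply, normSq_apply]
  simp only [add_re, add_im, sub_re, sub_im, one_re, one_im]
  ring

theorem Complex.norm_sub_ofReal_sq_sub_mul_norm_one_sub_sq (ζ : ℂ) (t : ℝ) :
    ‖ζ - t‖ ^ 2 - t * ‖1 - ζ‖ ^ 2 = (1 - t) * (‖ζ‖ ^ 2 - t) := by
  simp only [Complex.sq_norm, normSq_apply, sub_re, sub_im, ofReal_re, ofReal_im, one_re, one_im]
  ring

theorem Complex.mul_norm_one_sub_lt_norm_sub_sq {c : ℝ} (hc₀ : 0 ≤ c) (hc₁ : c < 1) {ζ : ℂ}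
    (hζ : c < ‖ζ‖) : c * ‖1 - ζ‖ < ‖ζ - ↑(c ^ 2)‖ := by
  have apollonius := norm_sub_ofReal_sq_sub_mul_norm_one_sub_sq ζ (c ^ 2)
  have hpos : 0 < (1 - c ^ 2) * (‖ζ‖ ^ 2 - c ^ 2) := mul_pos (by nlinarith) (by nlinarith)
  refine lt_of_pow_lt_pow_left₀ 2 (norm_nonneg _) ?_
  nlinarith

theorem sub_eq_div_sq_mul_add {R h a : ℝ} (ha : a ^ 2 = h ^ 2 - R ^ 2) (hs : h + a ≠ 0) :
    h - a = (R / (h + a)) ^ 2 * (h + a) := by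
  field_simp
  linear_combination -ha

theorem verruijt_add_center_eq {a h c : ℝ} (hc : h - a = c * (h + a)) {ζ : ℂ} (hζ : ζ ≠ 1) :
    -I * a * (1 + ζ) / (1 - ζ) + h * I = -I * (h + a) * (ζ - c) / (1 - ζ) := by
  have hden : (1 : ℂ) - ζ ≠ 0 := sub_ne_zero.2 hζ.symm
  have hc' : (h : ℂ) - a = c * (h + a) := by exact_mod_cast hc
  rw [div_add' _ _ _ hden, div_left_inj' hden]
  linear_combination I * hc'

/-- The backward Verruijt mapping `z(ζ) = −ia(1 + ζ)/(1 − ζ)`, with `a = √(h² − R²)` and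
`r = R/(h + √(h² − R²))`, sends the open annulus `r < |ζ| < 1` into the geomaterial region
(the open lower half plane with the closed tunnel disk removed). -/
theorem verruijt_backward_maps_annulus (R h a r : ℝ) (hR : 0 < R) (hRh : R < h)
    (ha : a = Real.sqrt (h ^ 2 - R ^ 2))
    (hr : r = R / (h + Real.sqrt (h ^ 2 - R ^ 2))) :
    ∀ ζ : ℂ, r < ‖ζ‖ → ‖ζ‖ < 1 →
      (-Complex.I * a * (1 + ζ) / (1 - ζ)).im < 0 ∧
      R < ‖-Complex.I * a * (1 + ζ) / (1 - ζ) + h * Complex.I‖ := by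
  intro ζ hrζ hζ₁
  have hsq : 0 < h ^ 2 - R ^ 2 := by nlinarith
  have ha₀ : 0 < a := ha ▸ Real.sqrt_pos.2 hsq
  have ha₂ : a ^ 2 = h ^ 2 - R ^ 2 := ha ▸ Real.sq_sqrt hsq.le
  have hs : 0 < h + a := by linarith
  rw [← ha] at hr
  have hr₀ : 0 ≤ r := hr ▸ div_nonneg hR.le hs.le
  have hr₁ : r < 1 := hr ▸ (div_lt_one hs).2 (by linarith)
  have hrs : r * (h + a) = R := hr ▸ div_mul_cancel₀ R hs.ne'
  have hζ : ζ ≠ 1 := by rintro rfl; simp at hζ₁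
  have hden : 0 < ‖1 - ζ‖ := norm_pos_iff.2 (sub_ne_zero.2 hζ.symm)
  constructor
  · have hre : 0 < ((1 + ζ) / (1 - ζ)).re := by
      rw [re_one_add_div_one_sub]
      exact div_pos (by nlinarith [norm_nonneg ζ]) (by positivity)
    rw [mul_div_assoc]
    simpa using mul_pos ha₀ hre
  · have hc : h - a = ↑(r ^ 2 : ℝ) * (h + a) := hr ▸ sub_eq_div_sq_mul_add ha₂ hs.ne'
    rw [verruijt_add_center_eq hc hζ]
    calc R = (h + a) * (r * ‖1 - ζ‖) / ‖1 - ζ‖ := by field_simp; linarith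
      _ < (h + a) * ‖ζ - ↑(r ^ 2)‖ / ‖1 - ζ‖ := by
        gcongr; exact mul_norm_one_sub_lt_norm_sub_sq hr₀ hr₁ hrζ
      _ = _ := by
        rw [← ofReal_add, norm_div, norm_mul, norm_mul, norm_neg, norm_I, one_mul, norm_real,
          Real.norm_of_nonneg hs.le]
end
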